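/- Let n ≥ 2, let G_1,…,G_n be vertex-disjoint finite simple graphs with chosen vertices u_i ∈ V(G_i), and let G be their vertex-gluing at u_1,…,u_n. Fix m ≥ 1 and suppose that for each i ∈ {1,…,n} and every m-fold cover (L_i,H_i) of G_i, every vertex s ∈ L_i(u_i) satisfies m · N(s,(L_i,H_i)) ≥ P_DP(G_i,m). Then m^{n-1} · P_DP(G,m) = ∏_{i=1}^{n} P_DP(G_i,m). -/

import Mathlib

open SimpleGraph Finset

/-- A (standardized) `m`-fold cover of a graph `G`: the vertex set of the cover graph `H`
is `V × Fin m`, where the fiber (list) of a vertex `v` is `L v = {v} × Fin m`.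
Every `m`-fold cover in the sense of Dvořák–Postle is isomorphic to one of this form. -/
structure DPCover {V : Type} (G : SimpleGraph V) (m : ℕ) where
  /-- the cover graph -/
  H : SimpleGraph (V × Fin m)
  /-- each fiber induces a complete graph -/
  fiber_complete : ∀ (v : V) (i j : Fin m), i ≠ j → H.Adj (v, i) (v, j)
  /-- cross-edges only join fibers of adjacent vertices -/
  cross : ∀ (u v : V) (i j : Fin m), H.Adj (u, i) (v, j) → u = v ∨ G.Adj u v
  /-- the cross-edges between the fibers of two adjacent vertices form a matching -/
  matching : ∀ (u v : V), G.Adj u v → ∀ (i j j' : Fin m),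
      H.Adj (u, i) (v, j) → H.Adj (u, i) (v, j') → j = j'

/-- `f` encodes an `(L,H)`-coloring of `G`, i.e. the set `{(v, f v) : v ∈ V}` is independent
in the cover graph. -/
def DPCover.IsColoring {V : Type} {G : SimpleGraph V} {m : ℕ} (C : DPCover G m)
    (f : V → Fin m) : Prop :=
  ∀ u v : V, ¬ C.H.Adj (u, f u) (v, f v)

/-- `P_DP(G, (L,H))`: the number of `(L,H)`-colorings of `G`. -/
noncomputable def DPCover.count {V : Type} [Fintype V] {G : SimpleGraph V} {m : ℕ}
    (C : DPCover G m) : ℕ :=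
  Nat.card { f : V → Fin m // C.IsColoring f }

/-- `N((v,j), (L,H))`: the number of `(L,H)`-colorings of `G` containing the vertex `(v, j)`. -/
noncomputable def DPCover.countAt {V : Type} [Fintype V] {G : SimpleGraph V} {m : ℕ}
    (C : DPCover G m) (v : V) (j : Fin m) : ℕ :=
  Nat.card { f : V → Fin m // C.IsColoring f ∧ f v = j }

/-- The DP color function `P_DP(G, m)`. -/
noncomputable def PDP {V : Type} [Fintype V] (G : SimpleGraph V) (m : ℕ) : ℕ :=
  sInf { n : ℕ | ∃ C : DPCover G m, n = C.count }

/-- The chromatic polynomial `P(G, m)`: the number of proper colorings with colors in `Fin m`. -/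
noncomputable def chromPoly {V : Type} [Fintype V] (G : SimpleGraph V) (m : ℕ) : ℕ :=
  Nat.card { f : V → Fin m // ∀ u v : V, G.Adj u v → f u ≠ f v }

/-- The DP color function threshold `τ_DP(G)`: the least `N ≥ χ(G)` such that
`P_DP(G,m) = P(G,m)` for all `m ≥ N` (and `∞` if there is no such `N`). -/
noncomputable def tauDP {V : Type} [Fintype V] (G : SimpleGraph V) : ℕ∞ :=
  sInf { N : ℕ∞ | ∃ n : ℕ, N = (n : ℕ∞) ∧ G.chromaticNumber ≤ (n : ℕ∞) ∧
      ∀ m : ℕ, n ≤ m → PDP G m = chromPoly G m }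

/-- The join `G ∨ K` of two vertex-disjoint graphs. -/
def joinG {α β : Type} (G : SimpleGraph α) (K : SimpleGraph β) : SimpleGraph (α ⊕ β) where
  Adj x y := match x, y with
    | Sum.inl a, Sum.inl a' => G.Adj a a'
    | Sum.inr b, Sum.inr b' => K.Adj b b'
    | Sum.inl _, Sum.inr _ => True
    | Sum.inr _, Sum.inl _ => True
  symm := by
    constructor
    rintro (a | b) (a' | b') h
    · exact h.symm
    · trivial
    · trivial
    · exact h.symm
  loopless := by
    constructor
    rintro (a | b) h
    · exact G.loopless.irrefl a h
    · exact K.loopless.irrefl b h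

/-- The vertex-gluing of graphs `G i` at the vertices `u i`: identify all the `u i` into a
single vertex (represented by `none`). -/
def VGlue {n : ℕ} {V : Fin n → Type} (G : ∀ i, SimpleGraph (V i)) (u : ∀ i, V i) :
    SimpleGraph (Option (Σ i : Fin n, {x : V i // x ≠ u i})) where
  Adj a b := match a, b with
    | none, none => False
    | none, some ⟨i, x⟩ => (G i).Adj (u i) x.val
    | some ⟨i, x⟩, none => (G i).Adj x.val (u i)
    | some ⟨i, x⟩, some ⟨j, y⟩ => ∃ h : i = j, (G j).Adj (cast (congrArg V h) x.val) y.val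
  symm := by
    constructor
    rintro (_ | ⟨i, x⟩) (_ | ⟨j, y⟩) h
    · exact h.elim
    · exact h.symm
    · exact h.symm
    · obtain ⟨rfl, h⟩ := h
      exact ⟨rfl, h.symm⟩
  loopless := by
    constructor
    rintro (_ | ⟨i, x⟩) h
    · exact h
    · obtain ⟨h', h⟩ := h
      exact (G i).loopless.irrefl x.val h

/-- The `K_p`-gluing of graphs `G i`, each with a chosen `p`-clique `U i 0, …, U i (p-1)`:
the cliques are identified coordinatewise (the glued clique is `Sum.inl (Fin p)`). -/
def KGlue {n p : ℕ} {V : Fin n → Type} (G : ∀ i, SimpleGraph (V i))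
    (U : ∀ i, Fin p → V i) :
    SimpleGraph ((Fin p) ⊕ (Σ i : Fin n, {x : V i // ∀ q, x ≠ U i q})) where
  Adj a b := match a, b with
    | Sum.inl q, Sum.inl q' => q ≠ q'
    | Sum.inl q, Sum.inr ⟨i, x⟩ => (G i).Adj (U i q) x.val
    | Sum.inr ⟨i, x⟩, Sum.inl q => (G i).Adj x.val (U i q)
    | Sum.inr ⟨i, x⟩, Sum.inr ⟨j, y⟩ => ∃ h : i = j, (G j).Adj (cast (congrArg V h) x.val) y.val
  symm := by
    constructor
    rintro (q | ⟨i, x⟩) (q' | ⟨j, y⟩) h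
    · exact h.symm
    · exact h.symm
    · exact h.symm
    · obtain ⟨rfl, h⟩ := h
      exact ⟨rfl, h.symm⟩
  loopless := by
    constructor
    rintro (q | ⟨i, x⟩) h
    · exact h rfl
    · obtain ⟨h', h⟩ := h
      exact (G i).loopless.irrefl x.val h

/-- The disjoint union of a family of graphs. -/
def sigmaG {n : ℕ} {V : Fin n → Type} (G : ∀ i, SimpleGraph (V i)) :
    SimpleGraph (Σ i : Fin n, V i) where
  Adj a b := ∃ h : a.1 = b.1, (G b.1).Adj (cast (congrArg V h) a.2) b.2
  symm := by
    constructor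
    rintro ⟨i, x⟩ ⟨j, y⟩ ⟨h1, h2⟩
    dsimp only at h1 h2 ⊢
    subst h1
    exact ⟨rfl, h2.symm⟩
  loopless := by
    constructor
    rintro ⟨i, x⟩ ⟨h1, h2⟩
    dsimp only at h2
    exact (G i).loopless.irrefl x h2

/-- chordal: every cycle of length at least `4` has a chord, i.e. an edge of the graph
joining two vertices of the cycle that is not an edge of the cycle. -/
def IsChordal {V : Type} (G : SimpleGraph V) : Prop :=
  ∀ (v : V) (w : G.Walk v v), w.IsCycle → 4 ≤ w.length →
    ∃ x y, x ∈ w.support ∧ y ∈ w.support ∧ G.Adj x y ∧ s(x, y) ∉ w.edges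


/-!
Colorings of the gluing are exactly the tuples of colorings of the pieces that agree at the glued
vertex, so for every cover `D` of the gluing, `m ^ n * count D = ∑ j, ∏ i, m * N(u_i, j)` where the
counts on the right are taken in the restrictions of `D` to the pieces. Each factor is at least
`P_DP(G_i, m)` by hypothesis, giving `m ^ (n - 1) * P_DP(G, m) ≥ ∏ i, P_DP(G_i, m)`. For an optimal
cover of `G_i` the hypothesis forces `m * N(u_i, j) = P_DP(G_i, m)` for every `j`, since these
terms sum to `m * P_DP(G_i, m)`; gluing optimal covers of the pieces then gives equality.
-/

namespace DPCover

variable {V W : Type} {G : SimpleGraph V} {G' : SimpleGraph W} {m : ℕ}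

lemma ext {C C' : DPCover G m} (h : C.H = C'.H) : C = C' := by
  cases C; cases C'; cases h; rfl

/-- The cover without cross-edges. -/
def trivial (G : SimpleGraph V) (m : ℕ) : DPCover G m where
  H.Adj p q := p.1 = q.1 ∧ p.2 ≠ q.2
  H.symm := ⟨fun _ _ h => ⟨h.1.symm, h.2.symm⟩⟩
  H.loopless := ⟨fun _ h => h.2 rfl⟩
  fiber_complete _ _ _ hij := ⟨rfl, hij⟩
  cross _ _ _ _ h := Or.inl h.1
  matching _ _ huv _ _ _ h := absurd h.1 (G.ne_of_adj huv)

def comap (C : DPCover G' m) (f : G ↪g G') : DPCover G m where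
  H := C.H.comap (Prod.map f id)
  fiber_complete v := C.fiber_complete (f v)
  cross _ _ _ _ h := (C.cross _ _ _ _ h).imp (fun h => f.injective h) f.map_adj_iff.mp
  matching _ _ huv := C.matching _ _ (f.map_adj_iff.mpr huv)

lemma count_eq_sum_countAt [Fintype V] (C : DPCover G m) (v : V) :
    C.count = ∑ j, C.countAt v j := by
  let e : { f : V → Fin m // C.IsColoring f } ≃
      Σ j : Fin m, { f : V → Fin m // C.IsColoring f ∧ f v = j } :=
    { toFun f := ⟨f.1 v, f.1, f.2, rfl⟩
      invFun s := ⟨s.2.1, s.2.2.1⟩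
      left_inv _ := rfl
      right_inv := by rintro ⟨j, f, hf, rfl⟩; rfl }
  rw [count, Nat.card_congr e, Nat.card_sigma]
  rfl

section Glue

variable {ι : Type} {V : ι → Type} {G : ∀ i, SimpleGraph (V i)}

/-- Covers of pieces `G i` of `G'` glue to a cover of `G'`, provided the pieces cover the vertices
of `G'` and no two distinct vertices of `G'` lie in two different pieces. -/
def glue (f : ∀ i, G i ↪g G') (hf : ∀ w, ∃ i x, f i x = w)
    (hf' : ∀ i k (x y : V i) (x' y' : V k), x ≠ y → f i x = f k x' → f i y = f k y' → i = k)
    (C : ∀ i, DPCover (G i) m) : DPCover G' m where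
  H.Adj p q := ∃ i x y, f i x = p.1 ∧ f i y = q.1 ∧ (C i).H.Adj (x, p.2) (y, q.2)
  H.symm := ⟨fun _ _ ⟨i, x, y, hx, hy, h⟩ => ⟨i, y, x, hy, hx, h.symm⟩⟩
  H.loopless := ⟨fun _ ⟨i, x, y, hx, hy, h⟩ =>
    (C i).H.loopless.irrefl _ ((f i).injective (hx.trans hy.symm) ▸ h)⟩
  fiber_complete w a b hab := by
    obtain ⟨i, x, rfl⟩ := hf w
    exact ⟨i, x, x, rfl, rfl, (C i).fiber_complete x a b hab⟩
  cross := by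
    rintro _ _ a b ⟨i, x, y, rfl, rfl, h⟩
    exact ((C i).cross x y a b h).imp (congrArg (f i)) (f i).map_adj_iff.mpr
  matching := by
    rintro w w' hww' a b b' ⟨i, x, y, rfl, rfl, h⟩ ⟨k, x', y', hx', hy', h'⟩
    have hxy : x ≠ y := fun hxy => G'.ne_of_adj hww' (congrArg (f i) hxy)
    obtain rfl := hf' i k x y x' y' hxy hx'.symm hy'.symm
    obtain rfl := (f i).injective hx'
    obtain rfl := (f i).injective hy'
    exact (C i).matching _ _ ((f i).map_adj_iff.mp hww') a b b' h h'

lemma comap_glue (f : ∀ i, G i ↪g G') (hf : ∀ w, ∃ i x, f i x = w)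
    (hf' : ∀ i k (x y : V i) (x' y' : V k), x ≠ y → f i x = f k x' → f i y = f k y' → i = k)
    (C : ∀ i, DPCover (G i) m) (i : ι) : (glue f hf hf' C).comap (f i) = C i := by
  refine ext (SimpleGraph.ext (funext₂ fun ⟨x, a⟩ ⟨y, b⟩ => propext ?_))
  change (∃ k x' y', f k x' = f i x ∧ f k y' = f i y ∧ (C k).H.Adj (x', a) (y', b)) ↔ _
  refine ⟨?_, fun h => ⟨i, x, y, rfl, rfl, h⟩⟩
  rintro ⟨k, x', y', hx', hy', h⟩
  by_cases hxy : x = y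
  · subst hxy
    obtain rfl : x' = y' := (f k).injective (hx'.trans hy'.symm)
    have hab : a ≠ b := fun hab => (C k).H.loopless.irrefl _ (hab ▸ h)
    exact (C i).fiber_complete x a b hab
  · obtain rfl := hf' i k x y x' y' hxy hx'.symm hy'.symm
    obtain rfl := (f i).injective hx'
    obtain rfl := (f i).injective hy'
    exact h

end Glue

end DPCover

lemma PDP_le_count {V : Type} [Fintype V] {G : SimpleGraph V} {m : ℕ} (C : DPCover G m) :
    PDP G m ≤ C.count :=
  Nat.sInf_le ⟨C, rfl⟩

lemma exists_count_eq_PDP {V : Type} [Fintype V] (G : SimpleGraph V) (m : ℕ) :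
    ∃ C : DPCover G m, C.count = PDP G m := by
  obtain ⟨C, hC⟩ : PDP G m ∈ {n | ∃ C : DPCover G m, n = C.count} :=
    Nat.sInf_mem ⟨_, DPCover.trivial G m, rfl⟩
  exact ⟨C, hC.symm⟩

lemma mul_countAt_eq_PDP {V : Type} [Fintype V] {G : SimpleGraph V} {m : ℕ} {C : DPCover G m}
    (hC : C.count = PDP G m) {v : V} (h : ∀ j, PDP G m ≤ m * C.countAt v j) (j : Fin m) :
    m * C.countAt v j = PDP G m := by
  have hsum : ∑ _j : Fin m, PDP G m = ∑ j, m * C.countAt v j := by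
    rw [← Finset.mul_sum, ← C.count_eq_sum_countAt, hC, Finset.sum_const, Finset.card_univ,
      Fintype.card_fin, smul_eq_mul]
  exact ((Finset.sum_eq_sum_iff_of_le fun j _ => h j).mp hsum j (Finset.mem_univ j)).symm

namespace VGlue

variable {n : ℕ} {V : Fin n → Type} [∀ i, DecidableEq (V i)] {G : ∀ i, SimpleGraph (V i)}
  {u : ∀ i, V i} {m : ℕ}

def inc (u : ∀ i, V i) (i : Fin n) (x : V i) : Option (Σ i : Fin n, {x : V i // x ≠ u i}) :=
  if h : x = u i then none else some ⟨i, x, h⟩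

@[simp]
lemma inc_self (i : Fin n) : inc u i (u i) = none :=
  dif_pos rfl

lemma inc_of_ne {i : Fin n} {x : V i} (h : x ≠ u i) : inc u i x = some ⟨i, x, h⟩ :=
  dif_neg h

lemma eq_of_inc_eq_some {i k : Fin n} {x : V i} {z : {y : V k // y ≠ u k}}
    (h : inc u i x = some ⟨k, z⟩) : i = k := by
  unfold inc at h
  split at h
  · exact absurd h (Option.some_ne_none _).symm
  · exact congrArg Sigma.fst (Option.some_injective _ h)

lemma inc_injective (i : Fin n) : Function.Injective (inc u i) := by
  intro x y h
  unfold inc at h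
  split at h <;> split at h <;> simp_all

lemma adj_inc_inc {i : Fin n} {x y : V i} :
    (VGlue G u).Adj (inc u i x) (inc u i y) ↔ (G i).Adj x y := by
  unfold inc
  split <;> split <;> rename_i hx hy
  · subst hx hy
    exact iff_of_false id ((G i).loopless.irrefl _)
  · subst hx; exact Iff.rfl
  · subst hy; exact Iff.rfl
  · exact ⟨fun ⟨_, h⟩ => h, fun h => ⟨rfl, h⟩⟩

def incEmb (G : ∀ i, SimpleGraph (V i)) (u : ∀ i, V i) (i : Fin n) : G i ↪g VGlue G u :=
  ⟨⟨inc u i, inc_injective i⟩, adj_inc_inc⟩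

lemma exists_incEmb_eq (hn : 0 < n) (w : Option (Σ i : Fin n, {x : V i // x ≠ u i})) :
    ∃ i x, incEmb G u i x = w := by
  rcases w with _ | ⟨i, x, hx⟩
  · exact ⟨⟨0, hn⟩, _, inc_self _⟩
  · exact ⟨i, x, inc_of_ne hx⟩

lemma eq_of_inc_eq_inc {i k : Fin n} {x y : V i} {x' y' : V k} (hxy : x ≠ y)
    (hx : inc u i x = inc u k x') (hy : inc u i y = inc u k y') : i = k := by
  wlog hxu : x ≠ u i generalizing x y x' y'
  · exact this (Ne.symm hxy) hy hx (fun hyu => hxy ((not_not.mp hxu).trans hyu.symm))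
  rw [inc_of_ne hxu] at hx
  exact (eq_of_inc_eq_some hx.symm).symm

lemma exists_inc_inc_of_adj {w w' : Option (Σ i : Fin n, {x : V i // x ≠ u i})}
    (h : (VGlue G u).Adj w w') : ∃ i x y, inc u i x = w ∧ inc u i y = w' := by
  rcases w with _ | ⟨i, x, hx⟩ <;> rcases w' with _ | ⟨k, y, hy⟩
  · exact h.elim
  · exact ⟨k, u k, y, inc_self k, inc_of_ne hy⟩
  · exact ⟨i, x, u i, inc_of_ne hx, inc_self i⟩
  · obtain ⟨rfl, -⟩ := h
    exact ⟨i, x, y, inc_of_ne hx, inc_of_ne hy⟩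

def lift {α : Type} (c : α) (g : ∀ i, V i → α) :
    Option (Σ i : Fin n, {x : V i // x ≠ u i}) → α
  | none => c
  | some ⟨i, x⟩ => g i x

lemma lift_inc {α : Type} {c : α} {g : ∀ i, V i → α} {i : Fin n} (hg : g i (u i) = c) (x : V i) :
    lift c g (inc u i x) = g i x := by
  by_cases hx : x = u i
  · subst hx; rw [inc_self, hg]; rfl
  · rw [inc_of_ne hx]; rfl

lemma isColoring_lift (D : DPCover (VGlue G u) m) {j : Fin m} {g : ∀ i, V i → Fin m}
    (hg : ∀ i, (D.comap (incEmb G u i)).IsColoring (g i) ∧ g i (u i) = j) :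
    D.IsColoring (lift j g) := by
  intro w w' h
  rcases D.cross _ _ _ _ h with rfl | hww'
  · exact D.H.loopless.irrefl _ h
  obtain ⟨i, x, y, rfl, rfl⟩ := exists_inc_inc_of_adj hww'
  rw [lift_inc (hg i).2, lift_inc (hg i).2] at h
  exact (hg i).1 x y h

def coloringEquiv (D : DPCover (VGlue G u) m) :
    { f // D.IsColoring f } ≃ Σ j : Fin m, ∀ i,
      { g : V i → Fin m // (D.comap (incEmb G u i)).IsColoring g ∧ g (u i) = j } where
  toFun f := ⟨f.1 none, fun i => ⟨f.1 ∘ inc u i, fun x y => f.2 _ _, by simp⟩⟩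
  invFun s := ⟨lift s.1 fun i => (s.2 i).1, isColoring_lift D fun i => (s.2 i).2⟩
  left_inv := by
    rintro ⟨f, hf⟩
    refine Subtype.ext (funext ?_)
    rintro (_ | ⟨i, x, hx⟩)
    · rfl
    · exact congrArg f (inc_of_ne hx)
  right_inv := by
    rintro ⟨j, g⟩
    exact Sigma.ext rfl <| heq_of_eq <| funext fun i =>
      Subtype.ext <| funext fun x => lift_inc (g i).2.2 x

variable [∀ i, Fintype (V i)]

lemma count_eq_sum_prod_countAt (D : DPCover (VGlue G u) m) :
    D.count = ∑ j, ∏ i, (D.comap (incEmb G u i)).countAt (u i) j := by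
  rw [DPCover.count, Nat.card_congr (coloringEquiv D), Nat.card_sigma]
  simp only [Nat.card_pi]
  rfl

lemma pow_mul_count_eq_sum_prod (D : DPCover (VGlue G u) m) :
    m ^ n * D.count = ∑ j, ∏ i, m * (D.comap (incEmb G u i)).countAt (u i) j := by
  simp only [count_eq_sum_prod_countAt D, Finset.mul_sum, Finset.prod_mul_distrib,
    Finset.prod_const, Finset.card_univ, Fintype.card_fin]

lemma mul_prod_PDP_le_pow_mul_count
    (h : ∀ (i : Fin n) (C : DPCover (G i) m) (j : Fin m), PDP (G i) m ≤ m * C.countAt (u i) j)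
    (D : DPCover (VGlue G u) m) :
    m * ∏ i, PDP (G i) m ≤ m ^ n * D.count := by
  rw [pow_mul_count_eq_sum_prod]
  calc m * ∏ i, PDP (G i) m = ∑ _j : Fin m, ∏ i, PDP (G i) m := by simp
    _ ≤ _ := Finset.sum_le_sum fun j _ => Finset.prod_le_prod' fun i _ => h i _ j

lemma exists_pow_mul_count_eq
    (h : ∀ (i : Fin n) (C : DPCover (G i) m) (j : Fin m), PDP (G i) m ≤ m * C.countAt (u i) j)
    (hn : 0 < n) :
    ∃ D : DPCover (VGlue G u) m, m ^ n * D.count = m * ∏ i, PDP (G i) m := by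
  choose C hC using fun i => exists_count_eq_PDP (G i) m
  refine ⟨DPCover.glue (incEmb G u) (exists_incEmb_eq hn)
    (fun _ _ _ _ _ _ hxy hx hy => eq_of_inc_eq_inc hxy hx hy) C, ?_⟩
  simp [pow_mul_count_eq_sum_prod, DPCover.comap_glue, mul_countAt_eq_PDP (hC _) (h _ _)]

end VGlue

theorem stmt_11 {n : ℕ} (hn : 2 ≤ n) {V : Fin n → Type}
    [∀ i, Fintype (V i)] [∀ i, DecidableEq (V i)]
    (G : ∀ i, SimpleGraph (V i)) (u : ∀ i, V i) (m : ℕ) (hm : 1 ≤ m)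
    (h : ∀ (i : Fin n) (C : DPCover (G i) m) (j : Fin m),
      PDP (G i) m ≤ m * C.countAt (u i) j) :
    m ^ (n - 1) * PDP (VGlue G u) m = ∏ i : Fin n, PDP (G i) m := by
  have hpow : m ^ n = m * m ^ (n - 1) := by rw [← pow_succ', Nat.sub_add_cancel (by omega)]
  obtain ⟨D, hD⟩ := VGlue.exists_pow_mul_count_eq h (by omega)
  obtain ⟨D', hD'⟩ := exists_count_eq_PDP (VGlue G u) m
  refine le_antisymm (Nat.le_of_mul_le_mul_left ?_ hm) (Nat.le_of_mul_le_mul_left ?_ hm)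
  · calc m * (m ^ (n - 1) * PDP (VGlue G u) m) ≤ m ^ n * D.count := by
          rw [hpow, mul_assoc]; gcongr; exact PDP_le_count D
      _ = _ := hD
  · rw [← hD', ← mul_assoc, ← hpow]
    exact VGlue.mul_prod_PDP_le_pow_mul_count h D'
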